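/- arXiv:1501.04750 — 8 statements merged into one kernel-verified Lean document; each statement's English description precedes it below -/
import Mathlib

section
/- For all nonnegative integers n, the sum over all integers j of (-1)^j * C(n, floor((n+3j)/2)) equals 1. -/
/-- Binomial coefficient `C(n,k)` with integer lower index, equal to `0` for `k < 0`
(and automatically `0` for `k > n`). -/
def intChoose (n : ℕ) (k : ℤ) : ℤ :=
  if 0 ≤ k then (n.choose k.toNat : ℤ) else 0

lemma intChoose_neg {n : ℕ} {k : ℤ} (h : k < 0) : intChoose n k = 0 := by
  simp [intChoose, not_le.2 h]

lemma intChoose_gt {n : ℕ} {k : ℤ} (h : (n : ℤ) < k) : intChoose n k = 0 := by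
  unfold intChoose
  rw [if_pos (by omega), Nat.choose_eq_zero_of_lt (by omega)]
  simp

lemma intChoose_symm (n : ℕ) (k : ℤ) : intChoose n ((n : ℤ) - k) = intChoose n k := by
  rcases lt_or_ge k 0 with h | h
  · rw [intChoose_neg h, intChoose_gt (by omega)]
  rcases le_or_gt k n with h2 | h2
  · unfold intChoose
    rw [if_pos (by omega), if_pos h]
    congr 1
    have : ((n : ℤ) - k).toNat = n - k.toNat := by omega
    rw [this, Nat.choose_symm (by omega)]
  · rw [intChoose_gt h2, intChoose_neg (by omega)]

lemma intChoose_pascal (n : ℕ) (k : ℤ) :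
    intChoose (n + 1) k = intChoose n k + intChoose n (k - 1) := by
  rcases lt_or_ge k 0 with h | h
  · rw [intChoose_neg h, intChoose_neg h, intChoose_neg (by omega)]; ring
  rcases eq_or_lt_of_le h with h0 | h1
  · rw [← h0]; simp [intChoose]
  · unfold intChoose
    rw [if_pos h, if_pos h, if_pos (by omega)]
    have hk : k.toNat = (k.toNat - 1) + 1 := by omega
    have hk1 : (k - 1).toNat = k.toNat - 1 := by omega
    rw [hk, hk1, Nat.choose_succ_succ]
    push_cast
    ring

lemma sign_flip {a b : ℕ} (h : (a + b) % 2 = 1) : (-1 : ℤ) ^ a = -(-1 : ℤ) ^ b := by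
  rcases Nat.even_or_odd a with ea | oa
  · have ob : Odd b := by rw [Nat.odd_iff]; rw [Nat.even_iff] at ea; omega
    rw [ea.neg_one_pow, ob.neg_one_pow]; ring
  · have eb : Even b := by rw [Nat.even_iff]; rw [Nat.odd_iff] at oa; omega
    rw [oa.neg_one_pow, eb.neg_one_pow]

lemma supp_finite (n : ℕ) (a : ℤ) :
    (Function.support fun j : ℤ =>
      (-1 : ℤ) ^ j.natAbs * intChoose n (((n : ℤ) + 3 * j + a) / 2)).Finite := by
  apply Set.Finite.subset (Set.finite_Icc (-(n : ℤ) - (a.natAbs : ℤ) - 1) ((n : ℤ) + (a.natAbs : ℤ) + 1))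
  intro j hj
  simp only [Function.mem_support] at hj
  by_contra hout
  apply hj
  have h : ((n : ℤ) + 3 * j + a) / 2 < 0 ∨ (n : ℤ) < ((n : ℤ) + 3 * j + a) / 2 := by
    simp only [Set.mem_Icc, not_and_or, not_le] at hout
    omega
  rcases h with h | h
  · rw [intChoose_neg h]; ring
  · rw [intChoose_gt h]; ring

/-- For all `n ≥ 0`, `∑_{j ∈ ℤ} (-1)^j C(n, ⌊(n+3j)/2⌋) = 1`. -/
theorem alternating_sum_mod3_strip (n : ℕ) :
    (∑ᶠ j : ℤ, (-1 : ℤ) ^ j.natAbs * intChoose n (((n : ℤ) + 3 * j) / 2)) = 1 := by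
  induction n with
  | zero =>
    rw [finsum_eq_single _ 0]
    · simp [intChoose]
    · intro j hj
      rcases lt_trichotomy j 0 with h | h | h
      · rw [intChoose_neg (by omega)]; ring
      · exact absurd h hj
      · rw [intChoose_gt (by push_cast; omega)]; ring
  | succ n ih =>
    have key : ∀ j : ℤ, (-1 : ℤ) ^ j.natAbs * intChoose (n + 1) (((↑(n + 1) : ℤ) + 3 * j) / 2)
        = ((-1 : ℤ) ^ j.natAbs * intChoose n (((n : ℤ) + 3 * j + 1) / 2))
          + ((-1 : ℤ) ^ j.natAbs * intChoose n (((n : ℤ) + 3 * j + (-1)) / 2)) := by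
      intro j
      have h1 : ((↑(n + 1) : ℤ) + 3 * j) = (n : ℤ) + 3 * j + 1 := by push_cast; ring
      rw [h1, intChoose_pascal]
      have h2 : ((n : ℤ) + 3 * j + 1) / 2 - 1 = ((n : ℤ) + 3 * j + (-1)) / 2 := by omega
      rw [h2]; ring
    rw [finsum_congr key, finsum_add_distrib (supp_finite n 1) (supp_finite n (-1))]
    have hA : (∑ᶠ j : ℤ, (-1 : ℤ) ^ j.natAbs * intChoose n (((n : ℤ) + 3 * j + 1) / 2)) = 1 := by
      have h3 := finsum_comp_equiv (Equiv.neg ℤ)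
        (f := fun j : ℤ => (-1 : ℤ) ^ j.natAbs * intChoose n (((n : ℤ) + 3 * j + 1) / 2))
      simp only [Equiv.neg_apply] at h3
      rw [← h3]
      refine Eq.trans (finsum_congr fun j => ?_) ih
      rw [Int.natAbs_neg]
      congr 1
      rw [← intChoose_symm n (((n : ℤ) + 3 * j) / 2)]
      congr 1
      omega
    have hB : (∑ᶠ j : ℤ, (-1 : ℤ) ^ j.natAbs * intChoose n (((n : ℤ) + 3 * j + (-1)) / 2)) = 0 := by
      have h3 := finsum_comp_equiv ((Equiv.neg ℤ).trans (Equiv.addLeft (1 : ℤ)))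
        (f := fun j : ℤ => (-1 : ℤ) ^ j.natAbs * intChoose n (((n : ℤ) + 3 * j + (-1)) / 2))
      simp only [Equiv.trans_apply, Equiv.neg_apply, Equiv.coe_addLeft] at h3
      have h2 : ∀ j : ℤ, (-1 : ℤ) ^ (1 + -j).natAbs * intChoose n (((n : ℤ) + 3 * (1 + -j) + (-1)) / 2)
          = -((-1 : ℤ) ^ j.natAbs * intChoose n (((n : ℤ) + 3 * j + (-1)) / 2)) := by
        intro j
        have hs : (-1 : ℤ) ^ (1 + -j).natAbs = -(-1 : ℤ) ^ j.natAbs := sign_flip (by omega)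
        have hc : ((n : ℤ) + 3 * (1 + -j) + (-1)) / 2 = (n : ℤ) - (((n : ℤ) + 3 * j + (-1)) / 2) := by
          omega
        rw [hs, hc, intChoose_symm]; ring
      rw [finsum_congr h2, finsum_neg_distrib] at h3
      omega
    rw [hA, hB]; norm_num
end

section
/- For all nonnegative integers n, the sum over all integers j of (-1)^j * C(n, floor((n+5j)/2)) equals F_{n+1}, the (n+1)-st Fibonacci number, which in turn equals the sum over k from 0 to floor(n/2) of C(n-k, k). -/
/-!
Put `G_r(n) := stripSum r n = ∑_j (-1)^j C(n, ⌊(n + 5j + r)/2⌋)`. Pascal's rule gives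
`G_r(n+1) = G_{r-1}(n) + G_{r+1}(n)`, and shifting `j` by one gives `G_{r+5} = -G_r`.
Hence the vector `(G_0, …, G_4)(n)` evolves by a fixed linear recurrence, and
`(F_{n+1}, F_{n+1}, F_n, 0, -F_n)` satisfies it with the same initial values `(1, 1, 0, 0, 0)`.
-/

lemma intChoose_of_neg (n : ℕ) {k : ℤ} (hk : k < 0) : intChoose n k = 0 :=
  if_neg (not_le.mpr hk)

lemma intChoose_of_lt (n : ℕ) {k : ℤ} (hk : (n : ℤ) < k) : intChoose n k = 0 := by
  rw [intChoose, if_pos (by omega), Nat.choose_eq_zero_of_lt (by omega), Nat.cast_zero]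

lemma intChoose_succ (n : ℕ) (k : ℤ) :
    intChoose (n + 1) k = intChoose n (k - 1) + intChoose n k := by
  rcases lt_trichotomy k 0 with hk | rfl | hk
  · simp [intChoose_of_neg, hk, show k - 1 < 0 by omega]
  · simp [intChoose]
  · have hk' : k.toNat = (k - 1).toNat + 1 := by omega
    simp only [intChoose, if_pos hk.le, if_pos (show 0 ≤ k - 1 by omega), hk',
      Nat.choose_succ_succ, Nat.cast_add]

lemma intChoose_succ_of_half (n : ℕ) (m : ℤ) :
    intChoose (n + 1) ((m + 1) / 2) = intChoose n ((m - 1) / 2) + intChoose n ((m + 1) / 2) := by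
  rw [intChoose_succ]
  congr 2
  omega

def stripTerm (r : ℤ) (n : ℕ) (j : ℤ) : ℤ :=
  (-1 : ℤ) ^ j.natAbs * intChoose n ((n + 5 * j + r) / 2)

noncomputable def stripSum (r : ℤ) (n : ℕ) : ℤ :=
  ∑ᶠ j : ℤ, stripTerm r n j

lemma support_stripTerm_subset (r : ℤ) (n : ℕ) :
    Function.support (stripTerm r n) ⊆ Set.Icc (-(n + r.natAbs : ℤ)) (n + r.natAbs) := by
  intro j hj
  by_contra hout
  apply hj
  rw [Set.mem_Icc, not_and_or] at hout
  rcases hout with hlow | hhigh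
  · rw [stripTerm, intChoose_of_neg n (by omega), mul_zero]
  · rw [stripTerm, intChoose_of_lt n (by omega), mul_zero]

lemma finite_support_stripTerm (r : ℤ) (n : ℕ) : (Function.support (stripTerm r n)).Finite :=
  (Set.finite_Icc _ _).subset (support_stripTerm_subset r n)

lemma stripSum_eq_sum_Icc (r : ℤ) (n : ℕ) :
    stripSum r n = ∑ j ∈ Finset.Icc (-(n + r.natAbs : ℤ)) (n + r.natAbs), stripTerm r n j :=
  finsum_eq_sum_of_support_subset _ (by simpa using support_stripTerm_subset r n)

lemma stripTerm_add_one (r : ℤ) (n : ℕ) (j : ℤ) :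
    stripTerm r n (j + 1) = -stripTerm (r + 5) n j := by
  have hsign : (-1 : ℤ) ^ (j + 1).natAbs = -(-1) ^ j.natAbs := by
    simp only [← Int.coe_negOnePow ℤ, Int.negOnePow_succ, Units.val_neg, Int.cast_neg]
  rw [stripTerm, stripTerm, hsign, show (n : ℤ) + 5 * (j + 1) + r = n + 5 * j + (r + 5) by ring,
    neg_mul]

lemma stripSum_add_five (r : ℤ) (n : ℕ) : stripSum (r + 5) n = -stripSum r n := by
  rw [stripSum, stripSum, ← finsum_comp_equiv (Equiv.addRight 1) (f := stripTerm r n)]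
  simp only [Equiv.coe_addRight, stripTerm_add_one, finsum_neg_distrib, neg_neg]

lemma stripSum_succ (r : ℤ) (n : ℕ) :
    stripSum r (n + 1) = stripSum (r - 1) n + stripSum (r + 1) n := by
  rw [stripSum, stripSum, stripSum, ← finsum_add_distrib (finite_support_stripTerm _ n)
    (finite_support_stripTerm _ n)]
  refine finsum_congr fun j => ?_
  have h := intChoose_succ_of_half n (n + 5 * j + r)
  simp only [stripTerm, Nat.cast_add, Nat.cast_one]
  rw [show (n : ℤ) + 1 + 5 * j + r = n + 5 * j + r + 1 by ring, h, mul_add]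
  congr 4 <;> ring

lemma stripSum_values (n : ℕ) :
    stripSum 0 n = Nat.fib (n + 1) ∧ stripSum 1 n = Nat.fib (n + 1) ∧
      stripSum 2 n = Nat.fib n ∧ stripSum 3 n = 0 ∧ stripSum 4 n = -(Nat.fib n : ℤ) := by
  induction n with
  | zero => refine ⟨?_, ?_, ?_, ?_, ?_⟩ <;> rw [stripSum_eq_sum_Icc] <;> decide
  | succ n ih =>
    obtain ⟨h0, h1, h2, h3, h4⟩ := ih
    have hm1 := stripSum_add_five (-1) n
    have h5 := stripSum_add_five 0 n
    have hfib : (Nat.fib (n + 2) : ℤ) = Nat.fib n + Nat.fib (n + 1) := by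
      exact_mod_cast Nat.fib_add_two
    norm_num at hm1 h5
    refine ⟨?_, ?_, ?_, ?_, ?_⟩ <;> rw [stripSum_succ] <;> norm_num <;> linarith

lemma fib_succ_eq_sum_range_choose (n : ℕ) :
    Nat.fib (n + 1) = ∑ k ∈ Finset.range (n / 2 + 1), (n - k).choose k := by
  rw [Nat.fib_succ_eq_sum_choose, ← Finset.Nat.sum_antidiagonal_swap]
  simp only [Prod.fst_swap, Prod.snd_swap]
  rw [Finset.Nat.sum_antidiagonal_eq_sum_range_succ (fun i j => j.choose i)]
  refine (Finset.sum_subset (Finset.range_subset_range.mpr (by omega)) fun k hk hk' => ?_).symm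
  simp only [Finset.mem_range] at hk hk'
  exact Nat.choose_eq_zero_of_lt (by omega)

/-- For all `n ≥ 0`, `∑_{j ∈ ℤ} (-1)^j C(n, ⌊(n+5j)/2⌋) = F_{n+1} = ∑_{k=0}^{⌊n/2⌋} C(n-k,k)`. -/
theorem alternating_sum_mod5_strip_eq_fib (n : ℕ) :
    (∑ᶠ j : ℤ, (-1 : ℤ) ^ j.natAbs * intChoose n (((n : ℤ) + 5 * j) / 2)) =
        (Nat.fib (n + 1) : ℤ) ∧
      Nat.fib (n + 1) = ∑ k ∈ Finset.range (n / 2 + 1), (n - k).choose k := by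
  refine ⟨?_, fib_succ_eq_sum_range_choose n⟩
  simpa [stripSum, stripTerm] using (stripSum_values n).1
end

section
/- The polynomial F_{k+1}(x, -1), where F_n denotes the Fibonacci polynomial sequence with F_0 = 0, F_1 = 1, F_n(x,s) = x F_{n-1} + s F_{n-2}, factors over the reals as the product over j from 1 to k of (x - 2 cos(j*pi/(k+1))). -/
open Real

/-- Bivariate Fibonacci polynomial sequence: `F_0 = 0`, `F_1 = 1`,
`F_n = x F_{n-1} + s F_{n-2}`. -/
def fibP (x s : ℝ) : ℕ → ℝ
  | 0 => 0
  | 1 => 1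
  | n + 2 => x * fibP x s (n + 1) + s * fibP x s n

/-- Bivariate Lucas polynomial sequence: `L_0 = 2`, `L_1 = x`,
`L_n = x L_{n-1} + s L_{n-2}`. -/
def lucasP (x s : ℝ) : ℕ → ℝ
  | 0 => 2
  | 1 => x
  | n + 2 => x * lucasP x s (n + 1) + s * lucasP x s n

/-- Polynomial version of `fibP · (-1)`. -/
noncomputable def fibQ : ℕ → Polynomial ℝ
  | 0 => 0
  | 1 => 1
  | n + 2 => Polynomial.X * fibQ (n + 1) - fibQ n

lemma fibQ_zero : fibQ 0 = 0 := rfl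
lemma fibQ_one : fibQ 1 = 1 := rfl
lemma fibQ_add_two (n : ℕ) : fibQ (n + 2) = Polynomial.X * fibQ (n + 1) - fibQ n := rfl

lemma fibQ_eval (x : ℝ) : ∀ n, (fibQ n).eval x = fibP x (-1) n
  | 0 => by simp [fibQ_zero, fibP]
  | 1 => by simp [fibQ_one, fibP]
  | n + 2 => by
    rw [fibQ_add_two, fibP]
    simp only [Polynomial.eval_sub, Polynomial.eval_mul, Polynomial.eval_X,
      fibQ_eval x (n + 1), fibQ_eval x n]
    ring

lemma fibQ_monic : ∀ n, (fibQ (n + 1)).Monic ∧ (fibQ (n + 1)).natDegree = n := by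
  have key : ∀ n, ((fibQ (n + 1)).Monic ∧ (fibQ (n + 1)).natDegree = n) ∧
      ((fibQ (n + 2)).Monic ∧ (fibQ (n + 2)).natDegree = n + 1) := by
    intro n
    induction n with
    | zero =>
      have h2 : fibQ 2 = Polynomial.X := by
        rw [fibQ_add_two, fibQ_one, fibQ_zero]; ring
      exact ⟨⟨Polynomial.monic_one, Polynomial.natDegree_one⟩,
        by rw [h2]; exact Polynomial.monic_X, by rw [h2]; exact Polynomial.natDegree_X⟩
    | succ n ih =>
      obtain ⟨⟨hm1, hd1⟩, hm2, hd2⟩ := ih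
      have h1 : (Polynomial.X * fibQ (n + 2)).Monic := Polynomial.monic_X.mul hm2
      have hdm : (Polynomial.X * fibQ (n + 2)).natDegree = n + 2 := by
        rw [Polynomial.natDegree_mul Polynomial.X_ne_zero hm2.ne_zero,
          Polynomial.natDegree_X, hd2]
        omega
      have hdeg : (-(fibQ (n + 1))).degree < (Polynomial.X * fibQ (n + 2)).degree := by
        rw [Polynomial.degree_neg, Polynomial.degree_eq_natDegree h1.ne_zero, hdm,
          Polynomial.degree_eq_natDegree hm1.ne_zero, hd1]
        exact_mod_cast by omega
      have hm3 : (fibQ (n + 3)).Monic := by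
        rw [show n + 3 = (n + 1) + 2 from rfl, fibQ_add_two, sub_eq_add_neg]
        exact h1.add_of_left hdeg
      have hd3 : (fibQ (n + 3)).natDegree = n + 2 := by
        have hdeq : (fibQ (n + 3)).degree = ((n + 2 : ℕ) : WithBot ℕ) := by
          rw [show n + 3 = (n + 1) + 2 from rfl, fibQ_add_two, sub_eq_add_neg,
            Polynomial.degree_add_eq_left_of_degree_lt hdeg,
            Polynomial.degree_eq_natDegree h1.ne_zero, hdm]
        exact Polynomial.natDegree_eq_of_degree_eq_some hdeq
      exact ⟨⟨hm2, hd2⟩, hm3, hd3⟩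
  exact fun n => (key n).1

lemma fibP_mul_sin (θ : ℝ) : ∀ n : ℕ, fibP (2 * Real.cos θ) (-1) n * Real.sin θ =
    Real.sin (n * θ) := by
  have key : ∀ n : ℕ,
      (fibP (2 * Real.cos θ) (-1) n * Real.sin θ = Real.sin (n * θ)) ∧
      (fibP (2 * Real.cos θ) (-1) (n + 1) * Real.sin θ = Real.sin (((n + 1 : ℕ) : ℝ) * θ)) := by
    intro n
    induction n with
    | zero => simp [fibP]
    | succ n ih =>
      obtain ⟨ih1, ih2⟩ := ih
      refine ⟨ih2, ?_⟩
      rw [fibP, add_mul, mul_assoc, mul_assoc, ih2, neg_one_mul, neg_mul, ih1]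
      have h2 : ((n + 1 + 1 : ℕ) : ℝ) * θ = ((n + 1 : ℕ) : ℝ) * θ + θ := by push_cast; ring
      have h0 : ((n : ℕ) : ℝ) * θ = ((n + 1 : ℕ) : ℝ) * θ - θ := by push_cast; ring
      rw [h2, h0, Real.sin_add, Real.sin_sub]
      ring
  exact fun n => (key n).1

theorem fibP_factorization_poly (k : ℕ) :
    fibQ (k + 1) = ∏ j ∈ Finset.Icc 1 k,
      (Polynomial.X - Polynomial.C (2 * Real.cos (j * Real.pi / (k + 1)))) := by
  rcases Nat.eq_zero_or_pos k with rfl | hk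
  · simp [fibQ_one]
  set c : ℕ → ℝ := fun j => 2 * Real.cos (j * Real.pi / (k + 1)) with hc
  set P : Polynomial ℝ := ∏ j ∈ Finset.Icc 1 k, (Polynomial.X - Polynomial.C (c j)) with hP
  have hPm : P.Monic := Polynomial.monic_prod_of_monic _ _ fun j _ =>
    Polynomial.monic_X_sub_C _
  have hPd : P.natDegree = k := by
    rw [hP, Polynomial.natDegree_prod _ _ fun j _ => Polynomial.X_sub_C_ne_zero _]
    simp
  have hQm := (fibQ_monic k).1
  have hQd := (fibQ_monic k).2
  have hθ : ∀ j ∈ Finset.Icc 1 k, 0 < (j : ℝ) * Real.pi / (k + 1) ∧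
      (j : ℝ) * Real.pi / (k + 1) < Real.pi := by
    intro j hj
    simp only [Finset.mem_Icc] at hj
    have hj1 : (1 : ℝ) ≤ (j : ℝ) := by exact_mod_cast hj.1
    have hjk : (j : ℝ) ≤ (k : ℝ) := by exact_mod_cast hj.2
    have hk1 : (0 : ℝ) < (k : ℝ) + 1 := by positivity
    have hπ := Real.pi_pos
    constructor
    · positivity
    · rw [div_lt_iff₀ hk1]
      nlinarith
  have hroot : ∀ y ∈ (Finset.Icc 1 k).image c, (fibQ (k + 1) - P).eval y = 0 := by
    intro y hy
    obtain ⟨j, hj, rfl⟩ := Finset.mem_image.mp hy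
    have hPz : P.eval (c j) = 0 := by
      rw [hP, Polynomial.eval_prod]
      exact Finset.prod_eq_zero hj (by simp)
    have hQz : (fibQ (k + 1)).eval (c j) = 0 := by
      rw [fibQ_eval]
      have hs := fibP_mul_sin ((j : ℝ) * Real.pi / (k + 1)) (k + 1)
      have hmul : ((k + 1 : ℕ) : ℝ) * ((j : ℝ) * Real.pi / (k + 1)) = (j : ℝ) * Real.pi := by
        have hne : ((k : ℝ) + 1) ≠ 0 := by positivity
        push_cast
        field_simp
      rw [hmul, Real.sin_nat_mul_pi] at hs
      have hsin : 0 < Real.sin ((j : ℝ) * Real.pi / (k + 1)) :=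
        Real.sin_pos_of_pos_of_lt_pi (hθ j hj).1 (hθ j hj).2
      rcases mul_eq_zero.mp hs with h | h
      · exact h
      · exact absurd h (ne_of_gt hsin)
    simp [hQz, hPz]
  have hinj : Set.InjOn c (Finset.Icc 1 k) := by
    intro a ha b hb hab
    simp only [Finset.coe_Icc, Set.mem_Icc] at ha hb
    have hπ := Real.pi_pos
    have hk1 : (0 : ℝ) < (k : ℝ) + 1 := by positivity
    have hmem : ∀ m : ℕ, 1 ≤ m → m ≤ k → (m : ℝ) * Real.pi / (k + 1) ∈ Set.Icc 0 Real.pi := by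
      intro m h1 h2
      have := hθ m (Finset.mem_Icc.mpr ⟨h1, h2⟩)
      exact ⟨le_of_lt this.1, le_of_lt this.2⟩
    have hcos : Real.cos ((a : ℝ) * Real.pi / (k + 1)) =
        Real.cos ((b : ℝ) * Real.pi / (k + 1)) :=
      mul_left_cancel₀ (by norm_num : (2 : ℝ) ≠ 0) hab
    have heq := Real.injOn_cos (hmem a ha.1 ha.2) (hmem b hb.1 hb.2) hcos
    have hd : Real.pi / ((k : ℝ) + 1) ≠ 0 := by positivity
    rw [mul_div_assoc, mul_div_assoc] at heq
    have hab' : (a : ℝ) = (b : ℝ) := mul_right_cancel₀ hd heq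
    exact_mod_cast hab'
  have hcard : ((Finset.Icc 1 k).image c).card = k := by
    rw [Finset.card_image_of_injOn hinj]
    simp
  by_contra hne
  have hDne : fibQ (k + 1) - P ≠ 0 := sub_ne_zero.mpr hne
  have hdlt : (fibQ (k + 1) - P).degree < (fibQ (k + 1)).degree :=
    Polynomial.degree_sub_lt
      (by rw [Polynomial.degree_eq_natDegree hQm.ne_zero,
        Polynomial.degree_eq_natDegree hPm.ne_zero, hQd, hPd])
      hQm.ne_zero
      (by rw [hQm.leadingCoeff, hPm.leadingCoeff])
  have hndlt : (fibQ (k + 1) - P).natDegree < k := by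
    have h := Polynomial.natDegree_lt_natDegree hDne hdlt
    rwa [hQd] at h
  have := Polynomial.eq_zero_of_natDegree_lt_card_of_eval_eq_zero' _ _ hroot
    (by rw [hcard]; exact hndlt)
  exact hDne this

/-- `F_{k+1}(x,-1) = ∏_{j=1}^{k} (x - 2 cos(jπ/(k+1)))`. -/
theorem fibP_factorization (k : ℕ) (x : ℝ) :
    fibP x (-1) (k + 1) =
      ∏ j ∈ Finset.Icc 1 k, (x - 2 * Real.cos (j * Real.pi / (k + 1))) := by
  rw [← fibQ_eval, fibP_factorization_poly, Polynomial.eval_prod]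
  simp
end

section
/- The polynomial F_{k+1}(x,-1) - F_k(x,-1), where F_n is the Fibonacci polynomial sequence with F_0 = 0, F_1 = 1, F_n = x F_{n-1} - F_{n-2}, equals the product over j from 0 to k-1 of (x - 2 cos((2j+1)*pi/(2k+1))). -/
open Real

/-!
Via `F_{n+1}(x,-1) = S_n(x)`, with `S` the rescaled Chebyshev polynomials of the second kind, the
left-hand side is the evaluation of the monic degree-`k` polynomial `S_k - S_{k-1}`. Since
`S_n(2 cos θ) sin θ = sin((n+1)θ)`, this polynomial vanishes at `2 cos θ` whenever
`sin((k+1)θ) = sin(kθ)`, in particular at `θ = (2j+1)π/(2k+1)`; for `j < k` these angles lie in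
`(0, π)`, so they give `k` distinct roots, i.e. all of them.
-/

open Polynomial Finset

theorem Polynomial.Monic.eq_prod_X_sub_C_of_injOn {R ι : Type*} [CommRing R] [IsDomain R]
    {p : R[X]} (hp : p.Monic) {s : Finset ι} {r : ι → R} (hr : Set.InjOn r s)
    (hroot : ∀ i ∈ s, p.IsRoot (r i)) (hdeg : p.natDegree = #s) :
    p = ∏ i ∈ s, (X - C (r i)) := by
  classical
  have hroots : p.roots = (s.image r).val := by
    refine roots_eq_of_degree_eq_card (by simpa using hroot) ?_
    rw [card_image_of_injOn hr, degree_eq_natDegree hp.ne_zero, hdeg]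
  have hcard : Multiset.card p.roots = p.natDegree := by
    rw [hroots, hdeg, Finset.card_val, card_image_of_injOn hr]
  rw [← prod_multiset_X_sub_C_of_monic_of_roots_card_eq hp hcard, hroots, ← prod_eq_multiset_prod,
    prod_image hr]

namespace Polynomial.Chebyshev

variable (R : Type*) [CommRing R] [Nontrivial R]

theorem degree_S_natCast (n : ℕ) : (S R n).degree = n := by
  induction n using Nat.twoStepInduction with
  | zero => simp
  | one => simp
  | more n ih1 ih2 =>
    push_cast at ih2 ⊢
    rw [S_add_two, degree_sub_eq_left_of_degree_lt] <;> rw [mul_comm, degree_mul_X, ih2]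
    · norm_cast
    · rw [ih1]; norm_cast; omega

theorem monic_S_natCast (n : ℕ) : (S R n).Monic := by
  induction n using Nat.twoStepInduction with
  | zero => simp
  | one => simp
  | more n ih1 ih2 =>
    push_cast at ih2 ⊢
    rw [S_add_two]
    refine (monic_X.mul ih2).sub_of_left ?_
    have hdeg := degree_S_natCast R (n + 1)
    push_cast at hdeg
    rw [mul_comm, degree_mul_X, hdeg, degree_S_natCast]
    norm_cast
    omega

theorem degree_S_sub_one_lt (n : ℕ) : (S R (n - 1)).degree < (S R n).degree := by
  cases n with
  | zero => simp
  | succ n =>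
    have hdeg := degree_S_natCast R (n + 1)
    push_cast at hdeg ⊢
    rw [add_sub_cancel_right, hdeg, degree_S_natCast]
    norm_cast
    omega

theorem monic_S_sub_S_sub_one (n : ℕ) : (S R n - S R (n - 1)).Monic :=
  (monic_S_natCast R n).sub_of_left (degree_S_sub_one_lt R n)

theorem natDegree_S_sub_S_sub_one (n : ℕ) : (S R n - S R (n - 1)).natDegree = n :=
  natDegree_eq_of_degree_eq_some <| by
    rw [degree_sub_eq_left_of_degree_lt (degree_S_sub_one_lt R n), degree_S_natCast]

theorem S_sub_S_sub_one_two_mul_real_cos (θ : ℝ) (n : ℤ) :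
    (S ℝ n - S ℝ (n - 1)).eval (2 * Real.cos θ) * Real.sin θ =
      Real.sin ((n + 1) * θ) - Real.sin (n * θ) := by
  rw [eval_sub, sub_mul, S_two_mul_real_cos, S_two_mul_real_cos]
  push_cast
  ring_nf

end Polynomial.Chebyshev

open Polynomial.Chebyshev

theorem fibP_neg_one_eq_eval_S (x : ℝ) (n : ℕ) : fibP x (-1) n = (S ℝ (n - 1)).eval x := by
  induction n using Nat.twoStepInduction with
  | zero => simp [fibP]
  | one => simp [fibP]
  | more n ih1 ih2 =>
    rw [fibP, ih1, ih2]
    push_cast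
    rw [show (n : ℤ) + 2 - 1 = n + 1 by ring, S_add_one]
    simp only [eval_sub, eval_mul, eval_X]
    ring_nf

theorem odd_mul_pi_div_mem_Ioo {j k : ℕ} (hj : j < k) :
    (2 * j + 1) * π / (2 * k + 1) ∈ Set.Ioo 0 π := by
  refine ⟨by positivity, (div_lt_iff₀ (by positivity)).2 ?_⟩
  have : (j : ℝ) + 1 ≤ k := by exact_mod_cast hj
  nlinarith [pi_pos]

theorem injOn_two_mul_cos_odd_mul_pi_div (k : ℕ) :
    Set.InjOn (fun j : ℕ ↦ 2 * cos ((2 * j + 1) * π / (2 * k + 1))) (range k) := by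
  intro i hi j hj hij
  have hi' := odd_mul_pi_div_mem_Ioo (mem_range.1 hi)
  have hj' := odd_mul_pi_div_mem_Ioo (mem_range.1 hj)
  have := injOn_cos (Set.Ioo_subset_Icc_self hi') (Set.Ioo_subset_Icc_self hj')
    (by simpa using hij)
  field_simp at this
  exact_mod_cast (by linarith : (i : ℝ) = j)

theorem isRoot_S_sub_S_sub_one_two_mul_cos {j k : ℕ} (hj : j < k) :
    (S ℝ k - S ℝ (k - 1)).IsRoot (2 * cos ((2 * j + 1) * π / (2 * k + 1))) := by
  set θ := (2 * j + 1) * π / (2 * k + 1)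
  have hsin : sin θ ≠ 0 := (sin_pos_of_mem_Ioo (odd_mul_pi_div_mem_Ioo hj)).ne'
  have hcos : cos (((k + 1) * θ + k * θ) / 2) = 0 :=
    cos_eq_zero_iff.2 ⟨j, by simp only [θ, Int.cast_natCast]; field_simp; ring⟩
  rw [IsRoot, ← mul_left_inj' hsin, zero_mul, S_sub_S_sub_one_two_mul_real_cos, Int.cast_natCast,
    sin_sub_sin, hcos, mul_zero]

/-- `F_{k+1}(x,-1) - F_k(x,-1) = ∏_{j=0}^{k-1} (x - 2 cos((2j+1)π/(2k+1)))`. -/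
theorem fibP_sub_fibP_factorization (k : ℕ) (x : ℝ) :
    fibP x (-1) (k + 1) - fibP x (-1) k =
      ∏ j ∈ Finset.range k,
        (x - 2 * Real.cos ((2 * j + 1) * Real.pi / (2 * k + 1))) := by
  have hfactor := (monic_S_sub_S_sub_one ℝ k).eq_prod_X_sub_C_of_injOn
    (injOn_two_mul_cos_odd_mul_pi_div k)
    (fun j hj ↦ isRoot_S_sub_S_sub_one_two_mul_cos (mem_range.1 hj))
    (by rw [natDegree_S_sub_S_sub_one, card_range])
  rw [fibP_neg_one_eq_eval_S, fibP_neg_one_eq_eval_S, Nat.cast_succ, add_sub_cancel_right,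
    ← eval_sub, hfactor, eval_prod]
  simp
end

section
/- For all nonnegative integers k and all real x, sum over j from 0 to k of (-1)^j * C(k,j) * C(2k-j, k) * (1-x)^j = sum over j from 0 to k of C(k,j)^2 * x^j. -/
/-!
Write `x = 1 - y` and expand each `(1 - y) ^ i` binomially: the coefficient of `(-y) ^ j` on the
right becomes `∑ᵢ C(k,i)² C(i,j)`. Trinomial revision `C(k,i) C(i,j) = C(k,j) C(k-j,i-j)` and
Vandermonde's identity evaluate it as `C(k,j) C(2k-j,k)`.
-/

open Finset

namespace Nat

theorem choose_sq_mul_choose {k i j : ℕ} (hi : i ≤ k) (hj : j ≤ k) :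
    k.choose i ^ 2 * i.choose j = k.choose j * (k.choose i * (k - j).choose (k - i)) := by
  rcases lt_or_ge i j with hij | hji
  · rw [choose_eq_zero_of_lt hij, choose_eq_zero_of_lt (by omega : k - j < k - i)]
    simp
  · rw [sq, mul_assoc, choose_mul hji,
      choose_symm_of_eq_add (by omega : k - j = (i - j) + (k - i))]
    ring

theorem sum_range_choose_sq_mul_choose (k j : ℕ) :
    ∑ i ∈ range (k + 1), k.choose i ^ 2 * i.choose j = k.choose j * (2 * k - j).choose k := by
  rcases lt_or_ge k j with hkj | hjk
  · rw [choose_eq_zero_of_lt hkj, zero_mul]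
    exact sum_eq_zero fun i hi => by
      rw [choose_eq_zero_of_lt (n := i) (by grind), mul_zero]
  rw [sum_congr rfl fun i hi => choose_sq_mul_choose (mem_range_succ_iff.1 hi) hjk, ← mul_sum,
    show 2 * k - j = k + (k - j) by omega, add_choose_eq,
    Finset.Nat.sum_antidiagonal_eq_sum_range_succ_mk]

end Nat

section CommRing

variable {R : Type*} [CommRing R]

theorem sum_range_choose_mul_pow_of_le {n m : ℕ} (h : n ≤ m) (a : R) :
    ∑ j ∈ range (m + 1), (n.choose j : R) * a ^ j = (a + 1) ^ n := by
  rw [add_pow, ← sum_subset (range_subset_range.2 (by omega : n + 1 ≤ m + 1))]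
  · exact sum_congr rfl fun j _ => by rw [one_pow, mul_one, mul_comm]
  · intro j _ hj
    rw [Nat.choose_eq_zero_of_lt (by simpa using hj), Nat.cast_zero, zero_mul]

theorem sum_range_choose_sq_mul_one_sub_pow (k : ℕ) (y : R) :
    ∑ i ∈ range (k + 1), (k.choose i : R) ^ 2 * (1 - y) ^ i =
      ∑ j ∈ range (k + 1), (-1) ^ j * (k.choose j : R) * ((2 * k - j).choose k : R) * y ^ j :=
  by
  calc ∑ i ∈ range (k + 1), (k.choose i : R) ^ 2 * (1 - y) ^ i
      = ∑ i ∈ range (k + 1), ∑ j ∈ range (k + 1),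
          (k.choose i : R) ^ 2 * i.choose j * (-y) ^ j := by
        refine sum_congr rfl fun i hi => ?_
        rw [sub_eq_neg_add, ← sum_range_choose_mul_pow_of_le (mem_range_succ_iff.1 hi),
          mul_sum]
        simp only [mul_assoc]
    _ = ∑ j ∈ range (k + 1), (k.choose j : R) * (2 * k - j).choose k * (-y) ^ j := by
        rw [sum_comm]
        refine sum_congr rfl fun j _ => ?_
        rw [← sum_mul]
        exact_mod_cast congrArg (fun n : ℕ => (n : R) * (-y) ^ j)
          (Nat.sum_range_choose_sq_mul_choose k j)
    _ = _ := sum_congr rfl fun j _ => by rw [neg_pow]; ring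

end CommRing

/-- `∑_{j=0}^{k} (-1)^j C(k,j) C(2k-j,k) (1-x)^j = ∑_{j=0}^{k} C(k,j)^2 x^j`. -/
theorem alternating_choose_identity (k : ℕ) (x : ℝ) :
    ∑ j ∈ Finset.range (k + 1),
        (-1 : ℝ) ^ j * (k.choose j : ℝ) * ((2 * k - j).choose k : ℝ) * (1 - x) ^ j =
      ∑ j ∈ Finset.range (k + 1), (k.choose j : ℝ) ^ 2 * x ^ j := by
  rw [← sum_range_choose_sq_mul_one_sub_pow, sub_sub_cancel]
end

section
/- For all integers k >= m >= 0 and all real x, sum over i from 0 to k-m of C(j+m, k-i) * C(k-m, i) * x^i = sum over l from 0 to k-m of (-1)^l * C(k-m, l) * C(k+j-l, j) * (1-x)^l, for every nonnegative integer j (this is identity (2.44) with general parameters j, k, m). -/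
/-!
Expand `x ^ i = ((x - 1) + 1) ^ i` binomially and exchange the sums. The coefficient of
`(x - 1) ^ l` is `∑ i, C(j+m, k-i) C(k-m, i) C(i, l)`; trinomial revision
`C(n, i) C(i, l) = C(n, l) C(n-l, i-l)` turns it into `C(k-m, l)` times a Vandermonde convolution,
which sums to `C(k+j-l, j)`. Finally `(x - 1) ^ l = (-1) ^ l (1 - x) ^ l`.
-/

open Finset

namespace Nat

theorem sum_range_choose_mul_choose_sub (a p r : ℕ) (hpr : p ≤ r) :
    ∑ t ∈ range (p + 1), p.choose t * a.choose (r - t) = (p + a).choose r := by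
  rw [add_choose_eq, Finset.Nat.sum_antidiagonal_eq_sum_range_succ_mk]
  refine sum_subset (range_subset_range.2 (by omega)) fun t _ ht => ?_
  rw [choose_eq_zero_of_lt (by simpa using ht), zero_mul]

theorem sum_range_choose_sub_mul_choose_mul_choose (a n r l : ℕ) (hln : l ≤ n) (hnr : n ≤ r) :
    ∑ i ∈ range (n + 1), a.choose (r - i) * n.choose i * i.choose l =
      n.choose l * (n - l + a).choose (r - l) := by
  obtain ⟨p, rfl⟩ := Nat.exists_eq_add_of_le hln
  have below_l : ∑ i ∈ range l, a.choose (r - i) * (l + p).choose i * i.choose l = 0 :=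
    sum_eq_zero fun i hi => by rw [choose_eq_zero_of_lt (mem_range.1 hi), mul_zero]
  rw [add_assoc, sum_range_add, below_l, zero_add, Nat.add_sub_cancel_left,
    ← sum_range_choose_mul_choose_sub a p (r - l) (by omega), mul_sum]
  refine sum_congr rfl fun t _ => ?_
  rw [mul_assoc, choose_mul (Nat.le_add_right l t), Nat.add_sub_cancel_left,
    Nat.add_sub_cancel_left, Nat.sub_add_eq]
  ring

end Nat

theorem pow_eq_sum_range_choose_mul_sub_one_pow {R : Type*} [CommRing R] (x : R) {i n : ℕ}
    (hin : i ≤ n) :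
    x ^ i = ∑ l ∈ range (n + 1), (i.choose l : R) * (x - 1) ^ l := by
  conv_lhs => rw [← sub_add_cancel x 1, add_pow]
  rw [← sum_subset (range_subset_range.2 (Nat.succ_le_succ hin))]
  · exact sum_congr rfl fun l _ => by ring
  · intro l _ hl
    rw [Nat.choose_eq_zero_of_lt (by simpa using hl), Nat.cast_zero, zero_mul]

/-- Identity (2.44): for `m ≤ k` and every `j ≥ 0`,
`∑_{i=0}^{k-m} C(j+m, k-i) C(k-m, i) x^i
  = ∑_{l=0}^{k-m} (-1)^l C(k-m, l) C(k+j-l, j) (1-x)^l`. -/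
theorem choose_identity_general (j k m : ℕ) (hmk : m ≤ k) (x : ℝ) :
    ∑ i ∈ Finset.range (k - m + 1),
        ((j + m).choose (k - i) : ℝ) * ((k - m).choose i : ℝ) * x ^ i =
      ∑ l ∈ Finset.range (k - m + 1),
        (-1 : ℝ) ^ l * ((k - m).choose l : ℝ) * ((k + j - l).choose j : ℝ) *
          (1 - x) ^ l := by
  calc _ = ∑ i ∈ range (k - m + 1), ∑ l ∈ range (k - m + 1),
          ((j + m).choose (k - i) : ℝ) * (k - m).choose i * i.choose l * (x - 1) ^ l := by
        refine sum_congr rfl fun i hi => ?_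
        rw [pow_eq_sum_range_choose_mul_sub_one_pow x (mem_range_succ_iff.1 hi), mul_sum]
        simp only [mul_assoc]
    _ = ∑ l ∈ range (k - m + 1), ((∑ i ∈ range (k - m + 1),
          (j + m).choose (k - i) * (k - m).choose i * i.choose l : ℕ) : ℝ) * (x - 1) ^ l := by
        rw [sum_comm]
        push_cast
        simp only [sum_mul]
    _ = _ := by
        refine sum_congr rfl fun l hl => ?_
        rw [Nat.sum_range_choose_sub_mul_choose_mul_choose _ _ _ _ (mem_range_succ_iff.1 hl) (Nat.sub_le k m),
          Nat.choose_symm_of_eq_add (by grind : k - m - l + (j + m) = k - l + j),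
          (by grind : k - m - l + (j + m) = k + j - l),
          ← neg_sub 1 x, neg_eq_neg_one_mul, mul_pow]
        push_cast
        ring
end

section
/- For all integers k >= 1, the Narayana polynomial satisfies (k+1) * sum_{i=1}^{k} C(k,i-1) C(k,i) x^i = k * sum_{l=0}^{k} (-1)^l C(k+1,l) C(2k-l,k) (1-x)^l, i.e. sum_{i=1}^{k} (1/k) C(k,i-1) C(k,i) x^i = sum_{l=0}^{k} (-1)^l (1/(k+1)) C(k+1,l) C(2k-l,k) (1-x)^l. -/
open Finset

lemma sumA (k l : ℕ) (hk : 1 ≤ k) (hl : l ≤ k) :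
    ∑ j ∈ Finset.range k, k.choose j * (k.choose (j+1) * (j+1).choose l)
      = k.choose l * (2*k - l).choose (k-1) := by
  have hterm : ∀ j ∈ Finset.range k,
      k.choose j * (k.choose (j+1) * (j+1).choose l)
        = k.choose l * (k.choose j * (k-l).choose (k-1-j)) := by
    intro j hj
    rw [Finset.mem_range] at hj
    rcases le_or_gt l (j+1) with h | h
    · rw [Nat.choose_mul h]
      have hsym : (k-l).choose (j+1-l) = (k-l).choose (k-1-j) := by
        rw [← Nat.choose_symm (show j+1-l ≤ k-l by omega)]
        congr 1
        omega
      rw [hsym]; ring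
    · have h1 : (j+1).choose l = 0 := Nat.choose_eq_zero_of_lt h
      have h2 : (k-l).choose (k-1-j) = 0 := Nat.choose_eq_zero_of_lt (by omega)
      rw [h1, h2]; ring
  rw [Finset.sum_congr rfl hterm, ← Finset.mul_sum]
  congr 1
  have hv := Nat.add_choose_eq k (k - l) (k - 1)
  have h2 : k + (k - l) = 2 * k - l := by omega
  rw [h2] at hv
  rw [hv, Finset.Nat.sum_antidiagonal_eq_sum_range_succ_mk]
  have h3 : (k - 1).succ = k := by omega
  rw [h3]

lemma sumB (k l : ℕ) (hk : 1 ≤ k) (hl : l ≤ k) :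
    (k+1) * (k.choose l * (2*k - l).choose (k-1))
      = k * ((k+1).choose l * (2*k - l).choose k) := by
  have h1 := Nat.choose_mul_succ_eq k l
  have h2 := Nat.choose_succ_right_eq (2*k - l) (k-1)
  have h3 : k - 1 + 1 = k := by omega
  rw [h3] at h2
  have h4 : 2*k - l - (k - 1) = k + 1 - l := by omega
  rw [h4] at h2
  calc (k+1) * (k.choose l * (2*k - l).choose (k-1))
      = (k.choose l * (k+1)) * (2*k - l).choose (k-1) := by ring
    _ = ((k+1).choose l * (k + 1 - l)) * (2*k - l).choose (k-1) := by rw [h1]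
    _ = (k+1).choose l * ((2*k - l).choose (k-1) * (k + 1 - l)) := by ring
    _ = (k+1).choose l * ((2*k - l).choose k * k) := by rw [← h2]
    _ = k * ((k+1).choose l * (2*k - l).choose k) := by ring

/-- Narayana polynomial identity: for `k ≥ 1`,
`(k+1) ∑_{i=1}^{k} C(k,i-1) C(k,i) x^i
  = k ∑_{l=0}^{k} (-1)^l C(k+1,l) C(2k-l,k) (1-x)^l`. -/
theorem narayana_polynomial_identity (k : ℕ) (hk : 1 ≤ k) (x : ℝ) :
    (k + 1 : ℝ) * ∑ i ∈ Finset.Icc 1 k, (k.choose (i - 1) : ℝ) * (k.choose i : ℝ) * x ^ i =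
      (k : ℝ) * ∑ l ∈ Finset.range (k + 1),
        (-1 : ℝ) ^ l * ((k + 1).choose l : ℝ) * ((2 * k - l).choose k : ℝ) *
          (1 - x) ^ l := by
  have hIcc : ∑ i ∈ Finset.Icc 1 k, (k.choose (i - 1) : ℝ) * (k.choose i : ℝ) * x ^ i
      = ∑ j ∈ Finset.range k, (k.choose j : ℝ) * (k.choose (j+1) : ℝ) * x ^ (j+1) := by
    rw [← Finset.Ico_add_one_right_eq_Icc, Finset.sum_Ico_eq_sum_range]
    have h : k + 1 - 1 = k := by omega
    rw [h]
    apply Finset.sum_congr rfl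
    intro j _
    have h1 : 1 + j - 1 = j := by omega
    rw [h1, Nat.add_comm 1 j]
  have hxpow : ∀ j ∈ Finset.range k, (x : ℝ) ^ (j+1)
      = ∑ l ∈ Finset.range (k+1), ((j+1).choose l : ℝ) * (x - 1) ^ l := by
    intro j hj
    rw [Finset.mem_range] at hj
    have h1 : (x : ℝ) ^ (j+1) = ((x - 1) + 1) ^ (j+1) := by ring_nf
    rw [h1, add_pow]
    rw [Finset.sum_subset (Finset.range_subset_range.2 (by omega : j + 1 + 1 ≤ k + 1))]
    · apply Finset.sum_congr rfl; intro l hl; push_cast; ring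
    · intro l _ hl
      rw [Finset.mem_range, not_lt] at hl
      rw [Nat.choose_eq_zero_of_lt (by omega)]
      push_cast; ring
  rw [hIcc, Finset.sum_congr rfl (fun j hj => by rw [hxpow j hj])]
  have key : ∀ l ∈ Finset.range (k+1),
      ((k:ℝ)+1) * ∑ j ∈ Finset.range k, (k.choose j : ℝ) * (k.choose (j+1)) * ((j+1).choose l)
        = (k:ℝ) * ((k+1).choose l) * ((2*k - l).choose k) := by
    intro l hl
    rw [Finset.mem_range] at hl
    have hA := sumA k l hk (by omega)
    have hB := sumB k l hk (by omega)
    have hc : ((k:ℝ)+1) * ∑ j ∈ Finset.range k, (k.choose j : ℝ) * (k.choose (j+1)) * ((j+1).choose l)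
        = (((k+1) * ∑ j ∈ Finset.range k, k.choose j * (k.choose (j+1) * (j+1).choose l) : ℕ) : ℝ) := by
      push_cast
      rw [Finset.mul_sum, Finset.mul_sum]
      apply Finset.sum_congr rfl; intros; ring
    rw [hc, hA, hB]; push_cast; ring
  calc ((k:ℝ) + 1) * ∑ j ∈ Finset.range k, (k.choose j : ℝ) * (k.choose (j+1)) *
        (∑ l ∈ Finset.range (k+1), ((j+1).choose l : ℝ) * (x - 1) ^ l)
      = ∑ l ∈ Finset.range (k+1), (((k:ℝ)+1) *
          ∑ j ∈ Finset.range k, (k.choose j : ℝ) * (k.choose (j+1)) * ((j+1).choose l)) * (x-1)^l := by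
        rw [Finset.mul_sum]
        have hin : ∀ j ∈ Finset.range k, ((k:ℝ)+1) * ((k.choose j : ℝ) * (k.choose (j+1)) *
            ∑ l ∈ Finset.range (k+1), ((j+1).choose l : ℝ) * (x - 1) ^ l)
            = ∑ l ∈ Finset.range (k+1), ((k:ℝ)+1) * ((k.choose j : ℝ) * (k.choose (j+1)) * ((j+1).choose l)) * (x-1)^l := by
          intro j _
          rw [Finset.mul_sum, Finset.mul_sum]
          apply Finset.sum_congr rfl; intros; ring
        rw [Finset.sum_congr rfl hin, Finset.sum_comm]
        apply Finset.sum_congr rfl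
        intro l _
        rw [Finset.mul_sum, Finset.sum_mul]
    _ = ∑ l ∈ Finset.range (k+1), ((k:ℝ) * ((k+1).choose l) * ((2*k - l).choose k)) * (x-1)^l := by
        apply Finset.sum_congr rfl
        intro l hl
        rw [key l hl]
    _ = (k : ℝ) * ∑ l ∈ Finset.range (k + 1),
        (-1 : ℝ) ^ l * ((k + 1).choose l : ℝ) * ((2 * k - l).choose k : ℝ) * (1 - x) ^ l := by
        rw [Finset.mul_sum]
        apply Finset.sum_congr rfl
        intro l _
        rw [show ((x:ℝ) - 1) = (-1) * (1 - x) by ring, mul_pow]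
        ring
end

section
/- For all nonnegative integers k and m with m <= k, the following power series identity holds in Q[[x]]: (1-x)^{2k+1} * sum over n >= 0 of C(n+k, k) * C(n+k-m, k) * x^{n} = x^m * sum over j from m to k of C(k-m, j-m) * C(k+m, j) * x^{j-m}. Equivalently, sum_{n>=0} C(n+k,k) C(n+k-m,k) x^n = (sum_{j=m}^{k} C(k-m,j-m) C(k+m,j) x^{j-m}) / (1-x)^{2k+1}. -/
open PowerSeries Finset

/-! Since `∑ₙ C(2k+n, 2k) Xⁿ = (1-X)^{-(2k+1)}`, the identity is equivalent to the coefficientwise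
statement `C(n+k,k) C(n+k-m,k) = ∑ⱼ C(k-m,j-m) C(k+m,j) C(2k+n-j,2k)`. For `n = a + m` this comes
from three applications of Vandermonde's convolution, the first two combined with trinomial
revision: `C(a+k+m,k) C(a+k,k) = ∑ᵣ C(a+k,k+r) C(k+r,k) C(k+m,k-r)`, then
`C(k+r,k) C(k+m,k-r) = ∑ᵢ C(k-m,i) C(k+m,k-i) C(k-i,k-r)`, and, after exchanging the sums,
`∑ᵣ C(a+k,k+r) C(k-i,k-r) = C(a+2k-i,2k)`. -/

theorem Nat.add_choose_eq_sum_range (x y c : ℕ) :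
    (x + y).choose c = ∑ i ∈ range (c + 1), x.choose i * y.choose (c - i) := by
  rw [Nat.add_choose_eq, Nat.sum_antidiagonal_eq_sum_range_succ_mk]

theorem add_choose_mul_add_choose_eq_sum (a b k : ℕ) :
    (a + b).choose k * (a + k).choose k =
      ∑ r ∈ range (k + 1), (a + k).choose (k + r) * (k + r).choose k * b.choose (k - r) := by
  rw [Nat.add_choose_eq_sum_range, sum_mul]
  refine sum_congr rfl fun r _ => ?_
  have revision := Nat.choose_mul (n := a + k) (k := k + r) (s := k) (Nat.le_add_right k r)
  rw [Nat.add_sub_cancel, Nat.add_sub_cancel_left] at revision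
  rw [revision]
  ring

theorem sum_choose_mul_choose_mul_choose_sub (p s k r : ℕ) (hr : r ≤ k) :
    ∑ i ∈ range (k + 1), p.choose i * (k + s).choose (k - i) * (k - i).choose (k - r) =
      (k + s).choose (k - r) * (p + (s + r)).choose r := by
  have high_terms_vanish : ∀ i ∈ range (k + 1), i ∉ range (r + 1) →
      p.choose i * (k + s).choose (k - i) * (k - i).choose (k - r) = 0 := fun i hi hir => by
    rw [mem_range] at hi hir
    rw [Nat.choose_eq_zero_of_lt (by omega : k - i < k - r), mul_zero]
  rw [← sum_subset (range_subset_range.mpr (by omega : r + 1 ≤ k + 1)) high_terms_vanish]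
  rw [Nat.add_choose_eq_sum_range p (s + r), mul_sum]
  refine sum_congr rfl fun i hi => ?_
  have hir : i ≤ r := Nat.lt_succ_iff.mp (mem_range.mp hi)
  have revision := Nat.choose_mul (n := k + s) (k := k - i) (s := k - r) (by omega)
  rw [show k + s - (k - r) = s + r by omega, show k - i - (k - r) = r - i by omega] at revision
  rw [mul_assoc, revision]
  ring

theorem sum_range_choose_add_mul_choose_sub (x y k : ℕ) (hy : y ≤ k) :
    ∑ r ∈ range (k + 1), x.choose (k + r) * y.choose (k - r) = (x + y).choose (2 * k) := by
  have low_terms_vanish : ∑ s ∈ range k, x.choose s * y.choose (2 * k - s) = 0 :=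
    sum_eq_zero fun s hs => by
      rw [Nat.choose_eq_zero_of_lt (by rw [mem_range] at hs; omega : y < 2 * k - s), mul_zero]
  rw [Nat.add_choose_eq_sum_range, show 2 * k + 1 = k + (k + 1) by omega,
    sum_range_add (fun s => x.choose s * y.choose (2 * k - s)), low_terms_vanish, zero_add]
  refine sum_congr rfl fun r _ => ?_
  rw [show 2 * k - (k + r) = k - r by omega]

theorem add_choose_mul_add_choose_eq_sum_range (a k m : ℕ) (hmk : m ≤ k) :
    (a + (k + m)).choose k * (a + k).choose k =
      ∑ i ∈ range (k + 1),
        (k - m).choose i * (k + m).choose (k - i) * (a + 2 * k - i).choose (2 * k) := by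
  have inner : ∀ r ∈ range (k + 1), (k + r).choose k * (k + m).choose (k - r) =
      ∑ i ∈ range (k + 1), (k - m).choose i * (k + m).choose (k - i) * (k - i).choose (k - r) := by
    intro r hr
    rw [sum_choose_mul_choose_mul_choose_sub _ _ _ _ (Nat.lt_succ_iff.mp (mem_range.mp hr)),
      show k - m + (m + r) = k + r by omega, Nat.choose_symm_add, mul_comm]
  rw [add_choose_mul_add_choose_eq_sum, sum_congr rfl fun r hr => by rw [mul_assoc, inner r hr],
    sum_congr rfl fun r _ => mul_sum _ _ _, sum_comm]
  refine sum_congr rfl fun i hi => ?_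
  have hik : i ≤ k := Nat.lt_succ_iff.mp (mem_range.mp hi)
  rw [show a + 2 * k - i = a + k + (k - i) by omega,
    ← sum_range_choose_add_mul_choose_sub _ _ _ (Nat.sub_le k i), mul_sum]
  refine sum_congr rfl fun r _ => ?_
  ring

theorem add_choose_mul_add_choose_eq_sum_Icc (a k m : ℕ) (hmk : m ≤ k) :
    (a + (k + m)).choose k * (a + k).choose k =
      ∑ j ∈ Icc m k,
        (k - m).choose (j - m) * (k + m).choose j * (a + 2 * k - (j - m)).choose (2 * k) := by
  rw [← Ico_add_one_right_eq_Icc, sum_Ico_eq_sum_range,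
    add_choose_mul_add_choose_eq_sum_range a k m hmk,
    eventually_constant_sum (N := k + 1 - m) (fun i hi => ?_) (by omega)]
  · refine sum_congr rfl fun i hi => ?_
    have hi : i < k + 1 - m := mem_range.mp hi
    rw [Nat.add_sub_cancel_left, Nat.choose_symm_of_eq_add (by omega : k + m = k - i + (m + i))]
  · rw [Nat.choose_eq_zero_of_lt (by omega : k - m < i), zero_mul, zero_mul]

/-- The truncated subtraction `a + d - i` drops below `d` exactly when `i > a`, where the
coefficient must vanish. -/
theorem coeff_X_pow_mul_mk_add_choose {R : Type*} [Semiring R] {d i : ℕ} (hi : i ≤ d) (a : ℕ) :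
    coeff a (X ^ i * PowerSeries.mk fun n => ((d + n).choose d : R)) =
      ((a + d - i).choose d : R) := by
  rw [coeff_X_pow_mul']
  split_ifs with hia
  · rw [coeff_mk, show d + (a - i) = a + d - i by omega]
  · rw [Nat.choose_eq_zero_of_lt (by omega : a + d - i < d), Nat.cast_zero]

/-- For `m ≤ k`, as formal power series in `ℚ[[X]]`:
`(1-X)^{2k+1} ∑_{n≥0} C(n+k,k) C(n+k-m,k) X^n
  = X^m ∑_{j=m}^{k} C(k-m, j-m) C(k+m, j) X^{j-m}`. -/
theorem powerSeries_choose_identity (k m : ℕ) (hmk : m ≤ k) :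
    (1 - X : PowerSeries ℚ) ^ (2 * k + 1) *
        PowerSeries.mk (fun n => ((n + k).choose k : ℚ) * ((n + k - m).choose k : ℚ)) =
      (X : PowerSeries ℚ) ^ m *
        ∑ j ∈ Finset.Icc m k,
          (PowerSeries.C (R := ℚ)) (((k - m).choose (j - m) : ℚ) * ((k + m).choose j : ℚ)) *
            X ^ (j - m) := by
  set P := ∑ j ∈ Icc m k,
    C (R := ℚ) (((k - m).choose (j - m) : ℚ) * ((k + m).choose j : ℚ)) * X ^ (j - m)
  have expansion : PowerSeries.mk (fun n => ((n + k).choose k : ℚ) * ((n + k - m).choose k : ℚ)) =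
      X ^ m * P * PowerSeries.mk fun n => ((2 * k + n).choose (2 * k) : ℚ) := by
    ext n
    rw [coeff_mk, mul_assoc, coeff_X_pow_mul']
    split_ifs with hmn
    · obtain ⟨a, rfl⟩ := Nat.exists_eq_add_of_le hmn
      rw [sum_mul, map_sum, show m + a + k = a + (k + m) by omega,
        show a + (k + m) - m = a + k by omega, Nat.add_sub_cancel_left]
      simp only [mul_assoc, coeff_C_mul]
      rw [sum_congr rfl fun j hj => by
        rw [coeff_X_pow_mul_mk_add_choose (by have := mem_Icc.mp hj; omega)]]
      exact_mod_cast (add_choose_mul_add_choose_eq_sum_Icc a k m hmk).trans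
        (sum_congr rfl fun _ _ => mul_assoc _ _ _)
    · rw [Nat.choose_eq_zero_of_lt (by omega : n + k - m < k), Nat.cast_zero, mul_zero]
  rw [expansion, mul_left_comm, mul_comm ((1 - X) ^ _), mk_add_choose_mul_one_sub_pow_eq_one,
    mul_one]
end
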